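/- arXiv:0808.0343 — 2 statements merged into one kernel-verified Lean document; each statement's English description precedes it below -/
import Mathlib

section
/- Let f ∈ C[x1,...,x6] be homogeneous of degree p, with no monomial divisible by x4x5, written as f = g(x1,x2,x3,x5,x6) + x4·h(x1,x2,x3,x4,x6). If the polynomial f(y1, y2, y3, y3y4, 1, y4) ∈ C[y1,y2,y3,y4] is divisible by y4^{p-1}, then every monomial of f has total degree in the variables x4 and x6 at least p-1. -/
/-!
On the chart every variable becomes a monomial, so the substitution sends `x^m` (`m_i` the exponent
of `x_i`) to `y^φ(m)` with
`φ(m) = (m₁, m₂, m₃ + m₄, m₄ + m₆)`, a linear map of exponents. Homogeneity together with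
`m₄ m₅ = 0` makes `φ` injective on the support of `f`, so no cancellation occurs and every
monomial of `f` survives with its coefficient. Divisibility by `y₄^(p-1)` then bounds the
`y₄`-exponent `m₄ + m₆` of each of them from below.
-/

open MvPolynomial

namespace MvPolynomial

variable {R σ τ : Type*} [CommSemiring R]

theorem IsHomogeneous.degree_eq_of_mem_support {f : MvPolynomial σ R} {p : ℕ}
    (hf : f.IsHomogeneous p) {m : σ →₀ ℕ} (hm : m ∈ f.support) : m.degree = p := by
  rw [Finsupp.degree_eq_weight_one]
  exact hf (mem_support_iff.mp hm)

theorem aeval_monomial_monomial (v : σ → τ →₀ ℕ) (m : σ →₀ ℕ) (c : R) :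
    aeval (fun i => monomial (v i) (1 : R)) (monomial m c) =
      monomial (Finsupp.linearCombination ℕ v m) c := by
  rw [aeval_monomial, Finsupp.linearCombination_apply, monomial_finsupp_sum_index, algebraMap_eq]
  simp only [monomial_pow, one_pow]

theorem coeff_aeval_monomial_of_injOn (v : σ → τ →₀ ℕ) {f : MvPolynomial σ R}
    (hinj : Set.InjOn (Finsupp.linearCombination ℕ v) f.support) {m : σ →₀ ℕ}
    (hm : m ∈ f.support) :
    coeff (Finsupp.linearCombination ℕ v m) (aeval (fun i => monomial (v i) (1 : R)) f) =
      coeff m f := by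
  classical
  conv_lhs => rw [f.as_sum]
  simp only [map_sum, aeval_monomial_monomial, coeff_sum, coeff_monomial]
  rw [Finset.sum_eq_single m (fun m' hm' hne => if_neg fun h => hne (hinj hm' hm h))
    (fun h => absurd hm h), if_pos rfl]

theorem le_of_X_pow_dvd_of_mem_support {q : MvPolynomial σ R} {i : σ} {k : ℕ} {n : σ →₀ ℕ}
    (hdvd : X i ^ k ∣ q) (hn : n ∈ q.support) : k ≤ n i := by
  classical
  obtain ⟨r, rfl⟩ := hdvd
  rw [mem_support_iff, X_pow_eq_monomial, coeff_monomial_mul'] at hn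
  by_contra hlt
  exact hn (if_neg (by rwa [Finsupp.single_le_iff]))

end MvPolynomial

noncomputable def chartExponent : Fin 6 → Fin 4 →₀ ℕ :=
  ![.single 0 1, .single 1 1, .single 2 1, .single 2 1 + .single 3 1, 0, .single 3 1]

theorem chart_eq_monomial :
    (![X 0, X 1, X 2, X 2 * X 3, 1, X 3] : Fin 6 → MvPolynomial (Fin 4) ℂ) =
      fun i => monomial (chartExponent i) 1 := by
  funext i
  fin_cases i <;> simp [chartExponent, X, monomial_mul]

theorem linearCombination_chartExponent (m : Fin 6 →₀ ℕ) :
    Finsupp.linearCombination ℕ chartExponent m =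
      fun₀ | 0 => m 0 | 1 => m 1 | 2 => m 2 + m 3 | 3 => m 3 + m 5 := by
  ext j
  rw [Finsupp.linearCombination_apply, Finsupp.sum_fintype _ _ (by simp)]
  fin_cases j <;> simp [Fin.sum_univ_six, chartExponent]

/- The image fixes `m 0`, `m 1`, `m 2 + m 3`, `m 3 + m 5`, and then the degree fixes
`m 4 - m 3`; since one of `m 3`, `m 4` vanishes, all six exponents are recovered. -/
theorem injOn_linearCombination_chartExponent (p : ℕ) :
    Set.InjOn (Finsupp.linearCombination ℕ chartExponent)
      {m | m.degree = p ∧ (m 3 = 0 ∨ m 4 = 0)} := by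
  rintro m ⟨hdeg, h34⟩ m' ⟨hdeg', h34'⟩ heq
  obtain ⟨e0, e1, e2, e3⟩ :
      m 0 = m' 0 ∧ m 1 = m' 1 ∧ m 2 + m 3 = m' 2 + m' 3 ∧ m 3 + m 5 = m' 3 + m' 5 := by
    simp only [linearCombination_chartExponent, Finsupp.ext_iff] at heq
    exact ⟨by simpa using heq 0, by simpa using heq 1, by simpa using heq 2, by simpa using heq 3⟩
  rw [Finsupp.degree_eq_sum, Fin.sum_univ_six] at hdeg hdeg'
  ext i
  fin_cases i <;> simp only [Fin.reduceFinMk, Fin.zero_eta, Fin.mk_one] <;> omega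

theorem monomials_high_degree_in_x4_x6_general (p : ℕ)
    (f : MvPolynomial (Fin 6) ℂ) (hf : f.IsHomogeneous p)
    (hno : ∀ m ∈ f.support, m 3 = 0 ∨ m 4 = 0)
    (hdiv : (X 3 : MvPolynomial (Fin 4) ℂ) ^ (p - 1) ∣
      aeval ![X 0, X 1, X 2, X 2 * X 3, 1, X 3] f) :
    ∀ m ∈ f.support, p - 1 ≤ m 3 + m 5 := by
  intro m hm
  rw [chart_eq_monomial] at hdiv
  have hinj : Set.InjOn (Finsupp.linearCombination ℕ chartExponent) f.support := by
    refine (injOn_linearCombination_chartExponent p).mono fun m' hm' => ?_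
    exact ⟨hf.degree_eq_of_mem_support hm', hno m' hm'⟩
  have hmem : Finsupp.linearCombination ℕ chartExponent m ∈
      (aeval (fun i => monomial (chartExponent i) (1 : ℂ)) f).support := by
    rw [mem_support_iff, coeff_aeval_monomial_of_injOn _ hinj hm]
    exact mem_support_iff.mp hm
  simpa [linearCombination_chartExponent] using le_of_X_pow_dvd_of_mem_support hdiv hmem

/-- Let `f ∈ ℂ[x1,…,x6]` be homogeneous of degree `p ≥ 1` with no monomial divisible by
`x4·x5` (variables indexed `0,…,5`, so `x4 = X 3`, `x5 = X 4`, `x6 = X 5`).  If the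
substitution `f(y1, y2, y3, y3y4, 1, y4)` is divisible by `y4^(p-1)`, then every monomial of
`f` has total degree at least `p - 1` in the variables `x4` and `x6`. -/
theorem monomials_high_degree_in_x4_x6 (p : ℕ) (hp : 1 ≤ p)
    (f : MvPolynomial (Fin 6) ℂ) (hf : f.IsHomogeneous p)
    (hno : ∀ m ∈ f.support, m 3 = 0 ∨ m 4 = 0)
    (hdiv : (X 3 : MvPolynomial (Fin 4) ℂ) ^ (p - 1) ∣
      aeval ![X 0, X 1, X 2, X 2 * X 3, 1, X 3] f) :
    ∀ m ∈ f.support, p - 1 ≤ m 3 + m 5 :=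
  monomials_high_degree_in_x4_x6_general p f hf hno hdiv
end

section
/- In Q4 = {x3x6 = x4x5} ⊂ P^5, the zero locus of x1x6 - x2x4 is the union of D1 = {x4 = x6 = 0} ∩ Q4 and the image of the Segre embedding P^1 × P^2 → P^5 given by ((u0:u1),(v0:v1:v2)) ↦ (u0v0 : u1v0 : u0v1 : u0v2 : u1v1 : u1v2). -/
private lemma vec6_five {α : Type*} (a b c d e f : α) : ![a, b, c, d, e, f] 5 = f := rfl

/-- In the quadric `Q4 = {x3x6 = x4x5} ⊂ ℙ⁵` (coordinates indexed `0,…,5`), the zero locus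
of `x1x6 - x2x4` is the union of `D1 = {x4 = x6 = 0} ∩ Q4` and the image of the Segre
embedding `ℙ¹ × ℙ² → ℙ⁵`, `((u0:u1),(v0:v1:v2)) ↦ (u0v0 : u1v0 : u0v1 : u0v2 : u1v1 : u1v2)`
(stated on the level of affine cones). -/
theorem segre_union_D1 :
    {w : Fin 6 → ℂ | w 2 * w 5 = w 3 * w 4 ∧ w 0 * w 5 = w 1 * w 3}
      = {w : Fin 6 → ℂ | w 3 = 0 ∧ w 5 = 0 ∧ w 2 * w 5 = w 3 * w 4}
        ∪ {w : Fin 6 → ℂ | ∃ a0 a1 b0 b1 b2 : ℂ,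
            w = ![a0 * b0, a1 * b0, a0 * b1, a0 * b2, a1 * b1, a1 * b2]} := by
  ext w
  simp only [Set.mem_setOf_eq, Set.mem_union]
  constructor
  · rintro ⟨h1, h2⟩
    by_cases h5 : w 5 = 0
    · by_cases h3 : w 3 = 0
      · exact Or.inl ⟨h3, h5, h1⟩
      · right
        have h4 : w 4 = 0 := by
          have : w 3 * w 4 = 0 := by rw [← h1, h5]; ring
          exact (mul_eq_zero.mp this).resolve_left h3
        have hw1 : w 1 = 0 := by
          have : w 1 * w 3 = 0 := by rw [← h2, h5]; ring
          exact (mul_eq_zero.mp this).resolve_right h3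
        refine ⟨1, 0, w 0, w 2, w 3, ?_⟩
        funext i
        fin_cases i <;> simp [vec6_five, Matrix.cons_val_succ, h4, hw1, h5]
    · right
      refine ⟨w 3, w 5, w 1 / w 5, w 4 / w 5, 1, ?_⟩
      funext i
      fin_cases i <;> simp [vec6_five, Matrix.cons_val_succ] <;> field_simp <;>
        first
        | linear_combination h1
        | linear_combination h2
  · rintro (⟨h3, h5, h1⟩ | ⟨a0, a1, b0, b1, b2, rfl⟩)
    · exact ⟨h1, by rw [h3, h5]; ring⟩
    · constructor <;> simp [vec6_five, Matrix.cons_val_succ] <;> ring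
end
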